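/- arXiv:1905.11043 — 4 statements merged into one kernel-verified Lean document; each statement's English description precedes it below -/
import Mathlib

section
/- If λ ∈ Γ_k (the Gårding cone) and 1 ≤ i ≤ n, then σ_{k-1}(λ|i) > 0, i.e., the partial derivative ∂σ_k/∂λᵢ is positive on Γ_k. -/
/-- The k-th elementary symmetric polynomial of `lam : Fin n → ℝ`. -/
noncomputable def sigmaE (n k : ℕ) (lam : Fin n → ℝ) : ℝ :=
  ∑ s ∈ Finset.powersetCard k (Finset.univ : Finset (Fin n)), ∏ i ∈ s, lam i

/-- The k-th elementary symmetric polynomial of the variables with `lam i` deleted. -/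
noncomputable def sigmaE1 (n k : ℕ) (lam : Fin n → ℝ) (i : Fin n) : ℝ :=
  ∑ s ∈ Finset.powersetCard k ((Finset.univ : Finset (Fin n)).erase i), ∏ j ∈ s, lam j

/-- The Gårding cone `Γ_k`. -/
def GammaCone (n k : ℕ) : Set (Fin n → ℝ) :=
  {lam | ∀ j, 1 ≤ j → j ≤ k → 0 < sigmaE n j lam}

/-!
Put `P(t) = ∏ⱼ (t + λⱼ) = ∑ⱼ σⱼ(λ) tⁿ⁻ʲ`, `Q(t) = ∏_{j ≠ i} (t + λⱼ)` and `m = n - k`.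
For `λ ∈ Γ_k` every coefficient of `f = P⁽ᵐ⁾` is nonnegative and `f(0) = m! σ_k(λ) > 0`, so `f > 0`
on `[0, ∞)`; on the other hand `g = Q⁽ᵐ⁾` has `g(0) = m! σ_{k-1}(λ|i)`. Since `Q` is real-rooted,
so are `g` and `h = Q⁽ᵐ⁻¹⁾`, and Leibniz' rule gives `f = (t + λᵢ) g + m h`. If `g(0) ≤ 0`, the
largest root `t₀` of `g = h'` is `≥ 0`, so `m h(t₀) = f(t₀) > 0`; but a real-rooted polynomial with
positive leading coefficient is `≤ 0` at its largest critical point.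
-/

open Polynomial

namespace Polynomial

theorem natDegree_iterate_derivative_eq {R : Type*} [Semiring R] [IsAddTorsionFree R]
    (p : R[X]) (j : ℕ) : (derivative^[j] p).natDegree = p.natDegree - j := by
  induction j with
  | zero => rfl
  | succ j ih => rw [Function.iterate_succ_apply', natDegree_derivative, ih, Nat.sub_sub]

theorem leadingCoeff_iterate_derivative_pos {p : ℝ[X]} (hp : 0 < p.leadingCoeff)
    {j : ℕ} (hj : j ≤ p.natDegree) : 0 < (derivative^[j] p).leadingCoeff := by
  induction j with
  | zero => exact hp
  | succ j ih =>
    rw [Function.iterate_succ_apply', leadingCoeff_derivative, natDegree_iterate_derivative_eq]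
    exact mul_pos (ih (by omega)) (by norm_cast; omega)

theorem iterate_derivative_X_add_C_mul {R : Type*} [CommSemiring R] (a : R)
    (p : R[X]) (m : ℕ) :
    derivative^[m + 1] ((X + C a) * p) =
      (X + C a) * derivative^[m + 1] p + (m + 1) • derivative^[m] p := by
  rw [add_mul, mul_comm X, iterate_map_add, iterate_derivative_mul_X, iterate_derivative_C_mul,
    Nat.add_sub_cancel]
  ring

theorem splits_derivative {p : ℝ[X]} (hp : p.Splits) : (derivative p).Splits := by
  rw [splits_iff_card_roots] at hp ⊢
  have := p.card_roots_le_derivative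
  have := (derivative p).card_roots'
  rw [natDegree_derivative] at this ⊢
  omega

theorem splits_iterate_derivative {p : ℝ[X]} (hp : p.Splits) (j : ℕ) :
    (derivative^[j] p).Splits := by
  induction j with
  | zero => exact hp
  | succ j ih => rw [Function.iterate_succ_apply']; exact splits_derivative ih

theorem Splits.eval_pos_of_forall_roots_lt {p : ℝ[X]} (hp : p.Splits)
    (hlc : 0 < p.leadingCoeff) {x : ℝ} (hx : ∀ r ∈ p.roots, r < x) : 0 < p.eval x := by
  rw [hp.eval_eq_prod_roots]
  refine mul_pos hlc (Multiset.prod_pos fun y hy ↦ ?_)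
  obtain ⟨r, hr, rfl⟩ := Multiset.mem_map.1 hy
  exact sub_pos.2 (hx r hr)

theorem Splits.eval_derivative_pos_of_forall_roots_lt {p : ℝ[X]} (hp : p.Splits)
    (hlc : 0 < p.leadingCoeff) (hdeg : p.natDegree ≠ 0) {x : ℝ} (hx : ∀ r ∈ p.roots, r < x) :
    0 < (derivative p).eval x := by
  have hpx := hp.eval_pos_of_forall_roots_lt hlc hx
  rw [hp.eval_derivative_eq_eval_mul_sum hpx.ne']
  refine mul_pos hpx ?_
  simpa using Multiset.sum_lt_sum_of_nonempty (f := 0) (hp.roots_ne_zero hdeg)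
    fun r hr ↦ one_div_pos.2 (sub_pos.2 (hx r hr))

theorem Splits.exists_greatest_root_ge_of_eval_nonpos {p : ℝ[X]} (hp : p.Splits)
    (hlc : 0 < p.leadingCoeff) {x : ℝ} (hx : p.eval x ≤ 0) :
    ∃ t ∈ p.roots, x ≤ t ∧ ∀ r ∈ p.roots, r ≤ t := by
  obtain ⟨s, hs, hxs⟩ : ∃ s ∈ p.roots, x ≤ s := by
    by_contra! h
    exact (hp.eval_pos_of_forall_roots_lt hlc h).not_ge hx
  obtain ⟨t, ht, hmax⟩ := Multiset.exists_max_image id (s := p.roots) (by rintro h; simp [h] at hs)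
  exact ⟨t, ht, hxs.trans (hmax s hs), hmax⟩

theorem Splits.eval_nonpos_of_greatest_root_derivative {p : ℝ[X]} (hp : p.Splits)
    (hlc : 0 < p.leadingCoeff) {t : ℝ} (ht : t ∈ (derivative p).roots)
    (hmax : ∀ r ∈ (derivative p).roots, r ≤ t) : p.eval t ≤ 0 := by
  by_contra! hpt
  have hdeg : p.natDegree ≠ 0 := derivative_ne_zero.1 (ne_zero_of_mem_roots ht)
  -- Gauss–Lucas on the real line: `p'` does not vanish to the right of all roots of `p`.
  obtain ⟨s, hs, hts⟩ : ∃ s ∈ p.roots, t ≤ s := by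
    by_contra! h
    exact (hp.eval_derivative_pos_of_forall_roots_lt hlc hdeg h).ne' (isRoot_of_mem_roots ht)
  have hps : p.eval s = 0 := isRoot_of_mem_roots hs
  have hts' : t < s := hts.lt_of_ne (by rintro rfl; linarith)
  obtain ⟨c, hc, hslope⟩ := exists_deriv_eq_slope (p.eval ·) hts' p.continuousOn
    p.differentiable.differentiableOn
  have hlc' : 0 < (derivative p).leadingCoeff := by
    rw [leadingCoeff_derivative]; exact mul_pos hlc (by norm_cast; omega)
  have hpc := (splits_derivative hp).eval_pos_of_forall_roots_lt hlc'
    fun r hr ↦ (hmax r hr).trans_lt hc.1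
  rw [← Polynomial.deriv, hslope, hps] at hpc
  exact (div_neg_of_neg_of_pos (by linarith) (by linarith)).not_gt hpc

theorem Splits.eval_iterate_derivative_pos {p : ℝ[X]} (hp : p.Splits)
    (hlc : 0 < p.leadingCoeff) {m : ℕ} (hm : m ≤ p.natDegree) (a x : ℝ)
    (hpos : ∀ t, x ≤ t → 0 < (derivative^[m] ((X + C a) * p)).eval t) :
    0 < (derivative^[m] p).eval x := by
  by_contra! h0
  obtain ⟨t, ht, hxt, hmax⟩ :=
    (splits_iterate_derivative hp m).exists_greatest_root_ge_of_eval_nonpos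
      (leadingCoeff_iterate_derivative_pos hlc hm) h0
  have hgt : (derivative^[m] p).eval t = 0 := isRoot_of_mem_roots ht
  have hft := hpos t hxt
  cases m with
  | zero => simp_all
  | succ m =>
    rw [iterate_derivative_X_add_C_mul, eval_add, eval_mul, hgt, mul_zero, zero_add, eval_smul,
      nsmul_eq_mul] at hft
    rw [Function.iterate_succ_apply'] at ht hmax
    have hht := (splits_iterate_derivative hp m).eval_nonpos_of_greatest_root_derivative
      (leadingCoeff_iterate_derivative_pos hlc (by omega)) ht hmax
    exact hft.not_ge (mul_nonpos_of_nonneg_of_nonpos (by positivity) hht)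

theorem eval_pos_of_coeff_nonneg {R : Type*} [CommSemiring R] [PartialOrder R]
    [IsStrictOrderedRing R] {p : R[X]} (hp : ∀ d, 0 ≤ p.coeff d) (h0 : 0 < p.coeff 0) {x : R}
    (hx : 0 ≤ x) : 0 < p.eval x := by
  rw [eval_eq_sum_range]
  exact Finset.sum_pos' (fun d _ ↦ mul_nonneg (hp d) (pow_nonneg hx d))
    ⟨0, by simp, by simpa using h0⟩

end Polynomial

theorem Finset.prod_X_add_C_coeff_card_sub {R ι : Type*} [CommSemiring R] (s : Finset ι)
    (r : ι → R) {j : ℕ} (hj : j ≤ s.card) :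
    (∏ i ∈ s, (X + C (r i))).coeff (s.card - j) = ∑ t ∈ s.powersetCard j, ∏ i ∈ t, r i := by
  rw [Finset.prod_X_add_C_coeff s r (Nat.sub_le _ _), Nat.sub_sub_self hj]

section GardingCone

variable {n k : ℕ} {lam : Fin n → ℝ}

theorem sigmaE_eq_coeff {j : ℕ} (hj : j ≤ n) :
    sigmaE n j lam = (∏ i, (X + C (lam i))).coeff (n - j) := by
  simpa [sigmaE] using (Finset.univ.prod_X_add_C_coeff_card_sub lam (by simpa using hj)).symm

theorem sigmaE1_eq_coeff (i : Fin n) {j : ℕ} (hj : j ≤ n - 1) :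
    sigmaE1 n j lam i = (∏ l ∈ Finset.univ.erase i, (X + C (lam l))).coeff (n - 1 - j) := by
  simpa [sigmaE1] using
    ((Finset.univ.erase i).prod_X_add_C_coeff_card_sub lam (by simpa using hj)).symm

theorem sigmaE_pos_of_mem_GammaCone (hlam : lam ∈ GammaCone n k) {j : ℕ} (hj : j ≤ k) :
    0 < sigmaE n j lam := by
  rcases j with _ | j
  · simp [sigmaE]
  · exact hlam (j + 1) (by omega) hj

theorem coeff_prod_X_add_C_nonneg (hlam : lam ∈ GammaCone n k) {j : ℕ} (hj : n - k ≤ j) :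
    0 ≤ (∏ i, (X + C (lam i))).coeff j := by
  rcases le_or_gt j n with hjn | hnj
  · rw [← Nat.sub_sub_self hjn, ← sigmaE_eq_coeff (Nat.sub_le n j)]
    exact (sigmaE_pos_of_mem_GammaCone hlam (by omega)).le
  · rw [coeff_eq_zero_of_natDegree_lt]
    simpa [natDegree_prod_of_monic _ _ fun i _ ↦ monic_X_add_C (lam i)] using hnj

theorem eval_iterate_derivative_prod_X_add_C_pos (hlam : lam ∈ GammaCone n k) (hkn : k ≤ n)
    {t : ℝ} (ht : 0 ≤ t) : 0 < (derivative^[n - k] (∏ i, (X + C (lam i)))).eval t := by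
  refine eval_pos_of_coeff_nonneg (fun d ↦ ?_) ?_ ht
  · rw [coeff_iterate_derivative]
    exact nsmul_nonneg (coeff_prod_X_add_C_nonneg hlam (by omega)) _
  · rw [coeff_iterate_derivative, zero_add, ← sigmaE_eq_coeff hkn, Nat.descFactorial_self]
    exact nsmul_pos (sigmaE_pos_of_mem_GammaCone hlam le_rfl) (Nat.factorial_ne_zero _)

theorem eval_zero_iterate_derivative_prod_erase (i : Fin n) (hk1 : 1 ≤ k) (hkn : k ≤ n) :
    (derivative^[n - k] (∏ l ∈ Finset.univ.erase i, (X + C (lam l)))).eval 0 =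
      (n - k).factorial • sigmaE1 n (k - 1) lam i := by
  rw [← coeff_zero_eq_eval_zero, coeff_iterate_derivative, zero_add, Nat.descFactorial_self,
    sigmaE1_eq_coeff i (by omega), show n - 1 - (k - 1) = n - k by omega]

end GardingCone

theorem stmt3 (n k : ℕ) (hk1 : 1 ≤ k) (hkn : k ≤ n) (lam : Fin n → ℝ)
    (hlam : lam ∈ GammaCone n k) (i : Fin n) :
    0 < sigmaE1 n (k - 1) lam i := by
  have hmonic : ∀ l ∈ Finset.univ.erase i, (X + C (lam l)).Monic := fun l _ ↦ monic_X_add_C _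
  have key := (Splits.prod fun l _ ↦ Splits.X_add_C (lam l)).eval_iterate_derivative_pos
    (by rw [(monic_prod_of_monic _ _ hmonic).leadingCoeff]; exact one_pos) (m := n - k)
    (by simp [natDegree_prod_of_monic _ _ hmonic]; omega) (lam i) 0 fun t ht ↦ by
      rw [Finset.mul_prod_erase Finset.univ (fun l ↦ X + C (lam l)) (Finset.mem_univ i)]
      exact eval_iterate_derivative_prod_X_add_C_pos hlam hkn ht
  rw [eval_zero_iterate_derivative_prod_erase i hk1 hkn] at key
  exact (nsmul_pos_iff (Nat.factorial_ne_zero _)).1 key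
end

section
/- For λ in the positive cone Γ₊ ⊂ ℝⁿ and 1 ≤ k < n, if f(λ) = (n/k)·[σ₁(λ) − (k+1)·σ_{k+1}(λ)/σ_k(λ)], then Σᵢ ∂f/∂λᵢ ≤ n. -/
open Finset Polynomial

theorem Multiset.exists_univ_val_map_eq {α : Type*} {n : ℕ} (t : Multiset α)
    (ht : Multiset.card t = n) : ∃ μ : Fin n → α, univ.val.map μ = t := by
  subst ht
  exact ⟨fun i => t.toList.get (i.cast (Multiset.length_toList t).symm), by
    rw [Fin.univ_val_map, ← List.ofFn_congr (Multiset.length_toList t), List.ofFn_get,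
      Multiset.coe_toList]⟩

theorem Finset.sum_powersetCard_succ_sum_erase {ι M : Type*} [Fintype ι] [DecidableEq ι]
    [AddCommMonoid M] (m : ℕ) (F : ι → Finset ι → M) :
    ∑ s ∈ powersetCard (m + 1) univ, ∑ i ∈ s, F i (s.erase i)
      = ∑ t ∈ powersetCard m univ, ∑ i ∈ tᶜ, F i t := by
  rw [sum_sigma', sum_sigma']
  refine sum_nbij' (fun p => ⟨p.1.erase p.2, p.2⟩) (fun p => ⟨insert p.2 p.1, p.2⟩)
    ?_ ?_ ?_ ?_ (fun _ _ => rfl)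
  · rintro ⟨s, i⟩ h
    simp only [mem_sigma, mem_powersetCard_univ] at h ⊢
    simp [card_erase_of_mem h.2, h.1]
  · rintro ⟨t, i⟩ h
    simp only [mem_sigma, mem_powersetCard_univ, mem_compl] at h ⊢
    simp [card_insert_of_notMem h.2, h.1]
  · rintro ⟨s, i⟩ h
    simp only [mem_sigma] at h
    simp [insert_erase h.2]
  · rintro ⟨t, i⟩ h
    simp only [mem_sigma, mem_compl] at h
    simp [erase_insert h.2]

theorem Polynomial.card_roots_derivative {p : ℝ[X]} (hp : Multiset.card p.roots = p.natDegree) :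
    Multiset.card (derivative p).roots = (derivative p).natDegree := by
  have hle := card_roots_le_derivative p
  have hge := card_roots' (derivative p)
  rw [natDegree_derivative] at hge ⊢
  omega

theorem Polynomial.neg_of_mem_roots_of_coeff_nonneg {R : Type*} [CommRing R]
    [LinearOrder R] [IsStrictOrderedRing R] {p : R[X]} (hp : ∀ m, 0 ≤ p.coeff m)
    (h0 : 0 < p.coeff 0) {r : R} (hr : r ∈ p.roots) : r < 0 := by
  by_contra! hr0
  have hp0 : p ≠ 0 := fun h => by simp [h] at h0
  refine ((mem_roots hp0).1 hr).not_gt ?_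
  rw [eval_eq_sum_range]
  exact sum_pos' (fun m _ => mul_nonneg (hp m) (pow_nonneg hr0 m))
    ⟨0, by simp, by simpa using h0⟩

theorem HasFDerivAt.div {𝕜 E : Type*} [NontriviallyNormedField 𝕜] [NormedAddCommGroup E]
    [NormedSpace 𝕜 E] {c d : E → 𝕜} {c' d' : E →L[𝕜] 𝕜} {x : E} (hc : HasFDerivAt c c' x)
    (hd : HasFDerivAt d d' x) (hx : d x ≠ 0) :
    HasFDerivAt (fun y => c y / d y) ((d x ^ 2)⁻¹ • (d x • c' - c x • d')) x := by
  simp only [div_eq_mul_inv]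
  refine (hc.fun_mul ((hasFDerivAt_inv hx).comp x hd)).congr_fderiv ?_
  ext v
  simp only [Function.comp_apply, add_apply, smul_apply, ContinuousLinearMap.comp_apply,
    ContinuousLinearMap.toSpanSingleton_apply, smul_eq_mul, mul_neg, sub_apply]
  field_simp
  ring

section ElementarySymmetric

variable {n : ℕ}

theorem sigmaE_eq_esymm (k : ℕ) (lam : Fin n → ℝ) :
    sigmaE n k lam = (univ.val.map lam).esymm k :=
  (esymm_map_val lam univ k).symm

theorem sigmaE_zero (lam : Fin n → ℝ) : sigmaE n 0 lam = 1 := by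
  simp [sigmaE]

theorem sigmaE_one (lam : Fin n → ℝ) : sigmaE n 1 lam = ∑ i, lam i := by
  simp [sigmaE, powersetCard_one]

theorem sigmaE_pos {k : ℕ} (hk : k ≤ n) {lam : Fin n → ℝ} (hlam : ∀ i, 0 < lam i) :
    0 < sigmaE n k lam :=
  sum_pos (fun _ _ => prod_pos fun i _ => hlam i) (powersetCard_nonempty.2 (by simpa using hk))

theorem sum_sum_prod_erase_eq_sigmaE (m : ℕ) (lam : Fin n → ℝ) :
    ∑ s ∈ powersetCard (m + 1) univ, ∑ i ∈ s, ∏ j ∈ s.erase i, lam j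
      = ((n - m : ℕ) : ℝ) * sigmaE n m lam := by
  rw [sum_powersetCard_succ_sum_erase m (fun _ t => ∏ j ∈ t, lam j), sigmaE, mul_sum]
  refine sum_congr rfl fun t ht => ?_
  rw [sum_const, card_compl, Fintype.card_fin, (mem_powersetCard_univ.1 ht), nsmul_eq_mul]

theorem two_mul_sigmaE_two (lam : Fin n → ℝ) :
    2 * sigmaE n 2 lam = (∑ i, lam i) ^ 2 - ∑ i, lam i ^ 2 := by
  have h := sum_powersetCard_succ_sum_erase 1 (fun i t => lam i * ∏ j ∈ t, lam j)
  have hpairs : ∑ s ∈ powersetCard 2 univ, ∑ i ∈ s, lam i * ∏ j ∈ s.erase i, lam j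
      = 2 * sigmaE n 2 lam := by
    rw [sigmaE, mul_sum]
    refine sum_congr rfl fun s hs => ?_
    rw [sum_congr rfl fun i hi => mul_prod_erase s lam hi, sum_const,
      mem_powersetCard_univ.1 hs, nsmul_eq_mul, Nat.cast_ofNat]
  have hsingle : ∑ t ∈ powersetCard 1 univ, ∑ i ∈ tᶜ, lam i * ∏ j ∈ t, lam j
      = ∑ j, ((∑ i, lam i) - lam j) * lam j := by
    simp only [powersetCard_one, sum_map, Function.Embedding.coeFn_mk, prod_singleton,
      ← sum_mul]
    refine sum_congr rfl fun j _ => ?_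
    rw [← sum_compl_add_sum {j} lam, sum_singleton, add_sub_cancel_right]
  rw [← hpairs, h, hsingle]
  simp only [sub_mul, sum_sub_distrib, ← mul_sum, sq]

theorem sigmaE_sub_eq_prod_mul_sigmaE_inv {m : ℕ} (hm : m ≤ n) {lam : Fin n → ℝ}
    (hlam : ∀ i, lam i ≠ 0) :
    sigmaE n (n - m) lam = (∏ i, lam i) * sigmaE n m (fun i => (lam i)⁻¹) := by
  rw [sigmaE, sigmaE, mul_sum]
  refine sum_nbij' compl compl ?_ ?_ (fun _ _ => compl_compl _) (fun _ _ => compl_compl _) ?_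
  · intro s hs
    simp only [mem_powersetCard_univ, card_compl, Fintype.card_fin] at hs ⊢
    omega
  · intro t ht
    simp only [mem_powersetCard_univ, card_compl, Fintype.card_fin] at ht ⊢
    omega
  · intro s _
    rw [prod_inv_distrib, ← prod_mul_prod_compl s lam, mul_assoc,
      mul_inv_cancel₀ (prod_ne_zero_iff.2 fun i _ => hlam i), mul_one]

theorem coeff_derivative_prod_X_add_C (lam : Fin (n + 1) → ℝ) {m : ℕ} (hm : m ≤ n) :
    (derivative (∏ i, (X + C (lam i)))).coeff m
      = ((m : ℝ) + 1) * sigmaE (n + 1) (n - m) lam := by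
  rw [coeff_derivative, prod_X_add_C_coeff _ _ (by simpa using hm), card_univ, Fintype.card_fin,
    mul_comm, sigmaE]
  simp

theorem exists_sigmaE_eq_of_derivative (lam : Fin (n + 1) → ℝ) (hlam : ∀ i, 0 < lam i) :
    ∃ μ : Fin n → ℝ, (∀ i, 0 < μ i) ∧
      ∀ e ≤ n, ((n : ℝ) + 1) * sigmaE n e μ = ((n : ℝ) + 1 - e) * sigmaE (n + 1) e lam := by
  set p : ℝ[X] := ∏ i, (X + C (lam i))
  have hp_deg : p.natDegree = n + 1 := by
    rw [natDegree_prod_of_monic _ _ fun i _ => monic_X_add_C (lam i)]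
    simp
  have hp_roots : Multiset.card p.roots = p.natDegree :=
    splits_iff_card_roots.1 (Splits.prod fun i _ => Splits.X_add_C (lam i))
  set q := derivative p
  have hq_coeff : ∀ m ≤ n, q.coeff m = _ := fun m => coeff_derivative_prod_X_add_C lam
  have hq_deg : q.natDegree = n := by rw [natDegree_derivative, hp_deg]; rfl
  have hq_lead : q.leadingCoeff = n + 1 := by
    rw [leadingCoeff, hq_deg, hq_coeff n le_rfl, Nat.sub_self, sigmaE_zero, mul_one]
  have hq_roots : Multiset.card q.roots = q.natDegree := card_roots_derivative hp_roots
  have hroots_neg : ∀ r ∈ q.roots, r < 0 := by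
    refine fun r => neg_of_mem_roots_of_coeff_nonneg (fun m => ?_) ?_
    · rcases le_or_gt m n with hm | hm
      · rw [hq_coeff m hm]
        exact mul_nonneg (by positivity) (sigmaE_pos (by omega) hlam).le
      · rw [coeff_eq_zero_of_natDegree_lt (by omega)]
    · rw [hq_coeff 0 (Nat.zero_le n)]
      exact mul_pos (by positivity) (sigmaE_pos (by omega) hlam)
  obtain ⟨μ, hμ⟩ := Multiset.exists_univ_val_map_eq (q.roots.map Neg.neg)
    (by rw [Multiset.card_map, hq_roots, hq_deg])
  refine ⟨μ, fun i => ?_, fun e he => ?_⟩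
  · have hi : μ i ∈ q.roots.map Neg.neg := hμ ▸ Multiset.mem_map_of_mem μ (mem_univ_val i)
    obtain ⟨r, hr, hri⟩ := Multiset.mem_map.1 hi
    linarith [hroots_neg r hr]
  · have hvieta := coeff_eq_esymm_roots_of_card hq_roots (k := n - e) (by omega)
    rw [hq_coeff (n - e) (by omega), hq_lead, hq_deg, Nat.sub_sub_self he] at hvieta
    rw [sigmaE_eq_esymm, hμ, Multiset.esymm_neg]
    push_cast [he] at hvieta
    linear_combination -hvieta

theorem sigmaE_newton_zero (lam : Fin n → ℝ) :
    2 * n * sigmaE n 2 lam ≤ (n - 1) * sigmaE n 1 lam ^ 2 := by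
  have hcs : (∑ i, lam i) ^ 2 ≤ n * ∑ i, lam i ^ 2 := by
    simpa using sq_sum_le_card_mul_sum_sq (s := univ) (f := lam)
  rw [mul_comm 2, mul_assoc, two_mul_sigmaE_two, sigmaE_one]
  linear_combination hcs

theorem sigmaE_newton_top (j : ℕ) {lam : Fin (j + 2) → ℝ} (hlam : ∀ i, lam i ≠ 0) :
    2 * ((j : ℝ) + 2) * sigmaE (j + 2) j lam * sigmaE (j + 2) (j + 2) lam
      ≤ ((j : ℝ) + 1) * sigmaE (j + 2) (j + 1) lam ^ 2 := by
  have h0 : sigmaE (j + 2) (j + 2) lam = ∏ i, lam i := by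
    simpa [sigmaE_zero] using sigmaE_sub_eq_prod_mul_sigmaE_inv (m := 0) (by omega) hlam
  have h1 : sigmaE (j + 2) (j + 1) lam = _ :=
    sigmaE_sub_eq_prod_mul_sigmaE_inv (m := 1) (by omega) hlam
  have h2 : sigmaE (j + 2) j lam = _ :=
    sigmaE_sub_eq_prod_mul_sigmaE_inv (m := 2) (by omega) hlam
  rw [h0, h1, h2]
  have hinv := sigmaE_newton_zero fun i => (lam i)⁻¹
  push_cast at hinv
  set P := ∏ i, lam i
  calc 2 * ((j : ℝ) + 2) * (P * sigmaE (j + 2) 2 fun i => (lam i)⁻¹) * P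
      = P ^ 2 * (2 * ((j : ℝ) + 2) * sigmaE (j + 2) 2 fun i => (lam i)⁻¹) := by ring
    _ ≤ P ^ 2 * (((j : ℝ) + 2 - 1) * (sigmaE (j + 2) 1 fun i => (lam i)⁻¹) ^ 2) := by gcongr
    _ = ((j : ℝ) + 1) * (P * sigmaE (j + 2) 1 fun i => (lam i)⁻¹) ^ 2 := by ring

theorem sigmaE_newton {j : ℕ} (hj : j + 2 ≤ n) {lam : Fin n → ℝ} (hlam : ∀ i, 0 < lam i) :
    ((j : ℝ) + 2) * (n - j) * sigmaE n j lam * sigmaE n (j + 2) lam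
      ≤ ((j : ℝ) + 1) * (n - j - 1) * sigmaE n (j + 1) lam ^ 2 := by
  induction n with
  | zero => omega
  | succ n ih =>
    rcases hj.eq_or_lt with hj | hj
    · obtain rfl : n = j + 1 := by omega
      have := sigmaE_newton_top j fun i => (hlam i).ne'
      push_cast
      linear_combination this
    obtain ⟨μ, hμ, hμσ⟩ := exists_sigmaE_eq_of_derivative lam hlam
    have hjn : (j : ℝ) + 2 < n + 1 := by exact_mod_cast hj
    have hA := hμσ j (by omega)
    have hB := hμσ (j + 1) (by omega)
    have hC := hμσ (j + 2) (by omega)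
    push_cast at hA hB hC ⊢
    refine le_of_mul_le_mul_left ?_ (by nlinarith : (0 : ℝ) < (n - j) * (n - j - 1))
    calc ((n : ℝ) - j) * (n - j - 1) * ((j + 2) * (n + 1 - j) * sigmaE (n + 1) j lam
            * sigmaE (n + 1) (j + 2) lam)
        = (j + 2) * (n - j) * ((n + 1 - j) * sigmaE (n + 1) j lam)
            * ((n + 1 - (j + 2)) * sigmaE (n + 1) (j + 2) lam) := by ring
      _ = ((n : ℝ) + 1) ^ 2 * ((j + 2) * (n - j) * sigmaE n j μ * sigmaE n (j + 2) μ) := by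
        rw [← hA, ← hC]; ring
      _ ≤ ((n : ℝ) + 1) ^ 2 * ((j + 1) * (n - j - 1) * sigmaE n (j + 1) μ ^ 2) := by
        exact mul_le_mul_of_nonneg_left (ih (by omega) hμ) (by positivity)
      _ = (j + 1) * (n - j - 1) * (((n : ℝ) + 1) * sigmaE n (j + 1) μ) ^ 2 := by ring
      _ = _ := by rw [hB]; ring

theorem hasFDerivAt_sigmaE (m : ℕ) (lam : Fin n → ℝ) :
    HasFDerivAt (sigmaE n m)
      (∑ s ∈ powersetCard m univ, ∑ i ∈ s,
        (∏ j ∈ s.erase i, lam j) • ContinuousLinearMap.proj (R := ℝ) (φ := fun _ : Fin n => ℝ) i)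
      lam :=
  HasFDerivAt.fun_sum fun _ _ => HasFDerivAt.finsetProd fun i _ => hasFDerivAt_apply i lam

theorem fderiv_sigmaE_succ_apply_one (m : ℕ) (lam : Fin n → ℝ) :
    fderiv ℝ (sigmaE n (m + 1)) lam 1 = ((n - m : ℕ) : ℝ) * sigmaE n m lam := by
  rw [(hasFDerivAt_sigmaE (m + 1) lam).fderiv, ← sum_sum_prod_erase_eq_sigmaE]
  simp

end ElementarySymmetric

theorem stmt6 (n k : ℕ) (hk1 : 1 ≤ k) (hkn : k < n) (lam : Fin n → ℝ)
    (hlam : ∀ i, 0 < lam i) :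
    ∑ i, fderiv ℝ
        (fun x => ((n : ℝ) / k) *
          (sigmaE n 1 x - (k + 1 : ℝ) * sigmaE n (k + 1) x / sigmaE n k x))
        lam (Pi.single i 1) ≤ (n : ℝ) := by
  obtain ⟨j, rfl⟩ : ∃ j, k = j + 1 := ⟨k - 1, by omega⟩
  have hσ : 0 < sigmaE n (j + 1) lam := sigmaE_pos hkn.le hlam
  have hd (m : ℕ) : HasFDerivAt (sigmaE n m) (fderiv ℝ (sigmaE n m) lam) lam :=
    (hasFDerivAt_sigmaE m lam).differentiableAt.hasFDerivAt
  have hquot := ((hd (j + 1 + 1)).const_mul (((j + 1 : ℕ) : ℝ) + 1)).div (hd (j + 1)) hσ.ne'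
  have hf := ((hd 1).fun_sub hquot).const_mul ((n : ℝ) / (j + 1 : ℕ))
  have hsum : ∑ i : Fin n, Pi.single i (1 : ℝ) = 1 := univ_sum_single 1
  rw [← map_sum, hsum, hf.fderiv]
  simp only [FunLike.coe_smul, FunLike.coe_sub, Pi.smul_apply, Pi.sub_apply, smul_eq_mul,
    fderiv_sigmaE_succ_apply_one]
  have hnewton := sigmaE_newton (j := j) (by omega) hlam
  rw [show j + 2 = j + 1 + 1 from rfl] at hnewton
  rw [sigmaE_zero, Nat.sub_zero]
  push_cast [Nat.cast_sub hkn.le, Nat.cast_sub (by omega : j ≤ n)]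
  have hn : (0 : ℝ) ≤ n := n.cast_nonneg
  rw [div_mul_eq_mul_div, div_le_iff₀ (by positivity)]
  field_simp
  linear_combination mul_le_mul_of_nonneg_left hnewton hn
end

section
/- For 1 ≤ k < n, the function f(λ) = (n/k)·[σ₁(λ) − (k+1)·σ_{k+1}(λ)/σ_k(λ)] is convex on the positive cone Γ₊ = {λ ∈ ℝⁿ : λᵢ > 0 for all i}. -/
/-!
Write `Q_k = σ_{k+1} / σ_k`. Then `f = (n/k) (σ₁ - (k+1) Q_k)` with `σ₁` linear, so it suffices
that `Q_k` is concave on `Γ₊`, which goes by induction on `k`: for `λ ∈ Γ₊`,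
`(k+2) Q_{k+1}(λ) = ∑ᵢ λᵢ Q_k(λ̂ᵢ) / (λᵢ + Q_k(λ̂ᵢ))`, where `λ̂ᵢ` omits the `i`-th coordinate,
and the parallel sum `p q / (p + q)` is jointly concave and increasing in both arguments on
positive reals, so it maps a pair of positive concave functions to a concave function.
-/
open Finset

section Algebra

variable {ι R : Type*} [CommSemiring R]

noncomputable def esymmOn (s : Finset ι) (k : ℕ) (u : ι → R) : R :=
  ∑ t ∈ s.powersetCard k, ∏ i ∈ t, u i

theorem esymmOn_zero (s : Finset ι) (u : ι → R) : esymmOn s 0 u = 1 := by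
  simp [esymmOn]

theorem esymmOn_one (s : Finset ι) (u : ι → R) : esymmOn s 1 u = ∑ i ∈ s, u i := by
  simp [esymmOn, powersetCard_one]

theorem esymmOn_pos [PartialOrder R] [IsStrictOrderedRing R] {s : Finset ι} {k : ℕ}
    {u : ι → R} (hk : k ≤ s.card) (hu : ∀ i ∈ s, 0 < u i) : 0 < esymmOn s k u :=
  sum_pos (fun _ ht => prod_pos fun i hi => hu i ((mem_powersetCard.1 ht).1 hi))
    (powersetCard_nonempty.2 hk)

variable [DecidableEq ι]

theorem esymmOn_insert {i : ι} {s : Finset ι} (hi : i ∉ s) (k : ℕ) (u : ι → R) :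
    esymmOn (insert i s) (k + 1) u = esymmOn s (k + 1) u + u i * esymmOn s k u := by
  simp only [esymmOn, ← esymm_map_val, insert_val_of_notMem hi, Multiset.map_cons,
    Multiset.esymm, Multiset.powersetCard_cons, Multiset.map_add, Multiset.sum_add,
    Multiset.map_map, Function.comp_def, Multiset.prod_cons, Multiset.sum_map_mul_left]

theorem esymmOn_erase {i : ι} {s : Finset ι} (hi : i ∈ s) (k : ℕ) (u : ι → R) :
    esymmOn s (k + 1) u = esymmOn (s.erase i) (k + 1) u + u i * esymmOn (s.erase i) k u := by
  conv_lhs => rw [← insert_erase hi]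
  exact esymmOn_insert (notMem_erase i s) k u

theorem succ_mul_esymmOn_succ (s : Finset ι) (k : ℕ) (u : ι → R) :
    (k + 1 : R) * esymmOn s (k + 1) u = ∑ i ∈ s, u i * esymmOn (s.erase i) k u := by
  induction s using Finset.induction generalizing k with
  | empty => rw [esymmOn, powersetCard_eq_empty.2 (by simp), sum_empty, mul_zero, sum_empty]
  | insert a t ha ih =>
    rw [esymmOn_insert ha, sum_insert ha, erase_insert ha]
    cases k with
    | zero => simp [esymmOn_zero, esymmOn_one, add_comm]
    | succ j =>
      have hsplit : ∑ i ∈ t, u i * esymmOn ((insert a t).erase i) (j + 1) u =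
          ∑ i ∈ t, u i * esymmOn (t.erase i) (j + 1) u +
            u a * ∑ i ∈ t, u i * esymmOn (t.erase i) j u := by
        rw [mul_sum, ← sum_add_distrib]
        refine sum_congr rfl fun i hi => ?_
        rw [erase_insert_of_ne (ne_of_mem_of_not_mem hi ha).symm,
          esymmOn_insert fun h => ha (mem_of_mem_erase h)]
        ring
      rw [hsplit, ← ih, ← ih]
      push_cast
      ring

end Algebra

def posCone (ι : Type*) : Set (ι → ℝ) := {u | ∀ i, 0 < u i}

theorem convex_posCone (ι : Type*) : Convex ℝ (posCone ι) := by
  simpa [Set.pi, posCone] using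
    convex_pi (s := Set.univ) fun (i : ι) _ => convex_Ioi (𝕜 := ℝ) (0 : ℝ)

theorem mul_div_add_le_mul_div_add {p q p' q' : ℝ} (hp : 0 < p) (hq : 0 < q) (hpp' : p ≤ p')
    (hqq' : q ≤ q') : p * q / (p + q) ≤ p' * q' / (p' + q') := by
  rw [div_le_div_iff₀ (by positivity) (by linarith)]
  nlinarith [mul_nonneg (mul_nonneg hp.le (hp.trans_le hpp').le) (sub_nonneg.2 hqq'),
    mul_nonneg (mul_nonneg hq.le (hq.trans_le hqq').le) (sub_nonneg.2 hpp')]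

theorem convex_combo_mul_div_add_le {p q r s a b : ℝ} (hp : 0 < p) (hq : 0 < q) (hr : 0 < r)
    (hs : 0 < s) (ha : 0 ≤ a) (hb : 0 ≤ b) (hab : a + b = 1) :
    a * (p * q / (p + q)) + b * (r * s / (r + s)) ≤
      (a * p + b * r) * (a * q + b * s) / (a * p + b * r + (a * q + b * s)) := by
  have hden : 0 < a * (p + q) + b * (r + s) :=
    convex_Ioi (𝕜 := ℝ) (0 : ℝ) (add_pos hp hq) (add_pos hr hs) ha hb hab
  obtain rfl : b = 1 - a := by linarith
  -- after clearing denominators the gap is `a (1 - a) (p s - q r)²`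
  rw [mul_div_assoc', mul_div_assoc', div_add_div _ _ (by positivity) (by positivity),
    div_le_div_iff₀ (by positivity) (by linarith)]
  nlinarith [mul_nonneg (mul_nonneg ha hb) (sq_nonneg (p * s - q * r))]

theorem ConcaveOn.mul_div_add {E : Type*} [AddCommGroup E] [Module ℝ E] {S : Set E}
    {f g : E → ℝ} (hf : ConcaveOn ℝ S f) (hg : ConcaveOn ℝ S g) (hf₀ : ∀ x ∈ S, 0 < f x)
    (hg₀ : ∀ x ∈ S, 0 < g x) : ConcaveOn ℝ S fun x => f x * g x / (f x + g x) := by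
  refine ⟨hf.1, fun x hx y hy a b ha hb hab => ?_⟩
  calc a • (f x * g x / (f x + g x)) + b • (f y * g y / (f y + g y))
      ≤ (a * f x + b * f y) * (a * g x + b * g y) / (a * f x + b * f y + (a * g x + b * g y)) :=
        convex_combo_mul_div_add_le (hf₀ x hx) (hg₀ x hx) (hf₀ y hy) (hg₀ y hy) ha hb hab
    _ ≤ f (a • x + b • y) * g (a • x + b • y) / (f (a • x + b • y) + g (a • x + b • y)) :=
        mul_div_add_le_mul_div_add
          (convex_Ioi (𝕜 := ℝ) (0 : ℝ) (hf₀ x hx) (hf₀ y hy) ha hb hab)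
          (convex_Ioi (𝕜 := ℝ) (0 : ℝ) (hg₀ x hx) (hg₀ y hy) ha hb hab)
          (hf.2 hx hy ha hb hab) (hg.2 hx hy ha hb hab)

section Ratio

variable {ι : Type*}

noncomputable def esymmRatio (s : Finset ι) (k : ℕ) (u : ι → ℝ) : ℝ :=
  esymmOn s (k + 1) u / esymmOn s k u

theorem esymmRatio_pos {s : Finset ι} {k : ℕ} {u : ι → ℝ} (hk : k + 1 ≤ s.card)
    (hu : ∀ i ∈ s, 0 < u i) : 0 < esymmRatio s k u :=
  div_pos (esymmOn_pos hk hu) (esymmOn_pos (by omega) hu)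

variable [DecidableEq ι]

theorem succ_succ_mul_esymmRatio_succ {s : Finset ι} {k : ℕ} {u : ι → ℝ} (hk : k + 1 ≤ s.card)
    (hu : ∀ i ∈ s, 0 < u i) :
    ((k : ℝ) + 2) * esymmRatio s (k + 1) u =
      ∑ i ∈ s, u i * esymmRatio (s.erase i) k u / (u i + esymmRatio (s.erase i) k u) := by
  have hterm : ∀ i ∈ s, u i * esymmRatio (s.erase i) k u / (u i + esymmRatio (s.erase i) k u) =
      u i * esymmOn (s.erase i) (k + 1) u / esymmOn s (k + 1) u := by
    intro i hi
    have hui : ∀ j ∈ s.erase i, 0 < u j := fun j hj => hu j (mem_of_mem_erase hj)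
    have hk' : k ≤ (s.erase i).card := by rw [card_erase_of_mem hi]; omega
    have hb := esymmOn_pos hk' hui
    have hsum := esymmOn_pos hk hu
    rw [esymmOn_erase hi] at hsum ⊢
    rw [esymmRatio, add_div' _ _ _ hb.ne', add_comm (u i * _)]
    field_simp
  rw [sum_congr rfl hterm, ← sum_div, ← succ_mul_esymmOn_succ, esymmRatio]
  push_cast
  ring

theorem concaveOn_esymmRatio {s : Finset ι} {k : ℕ} (hk : k + 1 ≤ s.card) :
    ConcaveOn ℝ (posCone ι) (esymmRatio s k) := by
  induction k generalizing s with
  | zero =>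
    refine ((∑ i ∈ s, LinearMap.proj i : (ι → ℝ) →ₗ[ℝ] ℝ).concaveOn (convex_posCone ι)).congr
      fun u _ => ?_
    simp [esymmRatio, esymmOn_one, esymmOn_zero]
  | succ k ih =>
    have hterm : ∀ i ∈ s, ConcaveOn ℝ (posCone ι)
        fun u => u i * esymmRatio (s.erase i) k u / (u i + esymmRatio (s.erase i) k u) := by
      intro i hi
      have hk' : k + 1 ≤ (s.erase i).card := by rw [card_erase_of_mem hi]; omega
      exact ((LinearMap.proj i : (ι → ℝ) →ₗ[ℝ] ℝ).concaveOn (convex_posCone ι)).mul_div_add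
        (ih hk') (fun u hu => hu i) fun u hu => esymmRatio_pos hk' fun j _ => hu j
    have hsum := sum_induction _ (ConcaveOn ℝ (posCone ι)) (fun _ _ => ConcaveOn.add)
      (concaveOn_const 0 (convex_posCone ι)) hterm
    refine (hsum.smul (c := ((k : ℝ) + 2)⁻¹) (by positivity)).congr fun u hu => ?_
    simp only [smul_eq_mul, Finset.sum_apply]
    rw [← succ_succ_mul_esymmRatio_succ (by omega) fun i _ => hu i]
    field_simp

end Ratio

theorem sigmaE_eq_esymmOn (n k : ℕ) : sigmaE n k = esymmOn univ k := rfl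

theorem stmt7_general (n k : ℕ) (hkn : k < n) :
    ConvexOn ℝ {lam : Fin n → ℝ | ∀ i, 0 < lam i}
      (fun lam => ((n : ℝ) / k) *
        (sigmaE n 1 lam - (k + 1 : ℝ) * sigmaE n (k + 1) lam / sigmaE n k lam)) := by
  have hratio : ConcaveOn ℝ (posCone (Fin n)) (esymmRatio univ k) :=
    concaveOn_esymmRatio (by simpa using hkn)
  have hsigma₁ : ConvexOn ℝ (posCone (Fin n)) (sigmaE n 1) :=
    ((∑ i, LinearMap.proj i : (Fin n → ℝ) →ₗ[ℝ] ℝ).convexOn (convex_posCone _)).congr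
      fun u _ => by simp [sigmaE_eq_esymmOn, esymmOn_one]
  refine ((hsigma₁.sub (hratio.smul (c := (k + 1 : ℝ)) (by positivity))).smul
    (c := (n : ℝ) / k) (by positivity)).congr fun u _ => ?_
  simp [esymmRatio, sigmaE_eq_esymmOn, mul_div_assoc]

theorem stmt7 (n k : ℕ) (hk1 : 1 ≤ k) (hkn : k < n) :
    ConvexOn ℝ {lam : Fin n → ℝ | ∀ i, 0 < lam i}
      (fun lam => ((n : ℝ) / k) *
        (sigmaE n 1 lam - (k + 1 : ℝ) * sigmaE n (k + 1) lam / sigmaE n k lam)) :=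
  stmt7_general n k hkn
end

section
/- For 0 ≤ l < k ≤ n, the function λ ↦ (σ_k(λ)/σ_l(λ))^{1/(k−l)} is concave on the positive cone Γ₊ = {λ ∈ ℝⁿ : λᵢ > 0 ∀ i}. -/
/-!
Write `q_j = σ_{j+1} / σ_j`. Then `σ_k / σ_l = q_l ⋯ q_{k-1}`, so the function is the geometric
mean of `q_l, …, q_{k-1}`. Each `q_j` is superadditive on the positive cone (Marcus–Lopes): the
identity `(j + 2) q_{j+1}(λ) = ∑ i, λ_i q_j(λ ∖ i) / (λ_i + q_j(λ ∖ i))` reduces this, by induction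
on `j`, to the superadditivity and monotonicity of `(a, b) ↦ a b / (a + b)`. The geometric mean is
monotone and superadditive on positive vectors (by AM-GM), so the function is superadditive; being
positively homogeneous of degree one, it is concave.
-/

open Finset

variable {ι : Type*}

namespace Finset

section CommSemiring

variable {R : Type*} [CommSemiring R]

def esymm (s : Finset ι) (f : ι → R) (k : ℕ) : R :=
  ∑ t ∈ s.powersetCard k, ∏ i ∈ t, f i

@[simp]
theorem esymm_zero (s : Finset ι) (f : ι → R) : s.esymm f 0 = 1 := by
  simp [esymm]

theorem esymm_one (s : Finset ι) (f : ι → R) : s.esymm f 1 = ∑ i ∈ s, f i := by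
  simp [esymm, powersetCard_one]

theorem esymm_insert [DecidableEq ι] {s : Finset ι} {a : ι} (ha : a ∉ s) (f : ι → R) (k : ℕ) :
    (insert a s).esymm f (k + 1) = s.esymm f (k + 1) + f a * s.esymm f k := by
  simp only [esymm, ← esymm_map_val, insert_val_of_notMem ha, Multiset.map_cons]
  simp [Multiset.esymm, Multiset.powersetCard_cons, Multiset.sum_map_mul_left]

theorem esymm_erase [DecidableEq ι] {s : Finset ι} {a : ι} (ha : a ∈ s) (f : ι → R) (k : ℕ) :
    s.esymm f (k + 1) = (s.erase a).esymm f (k + 1) + f a * (s.erase a).esymm f k := by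
  rw [← esymm_insert (notMem_erase a s), insert_erase ha]

theorem succ_mul_esymm_succ [DecidableEq ι] (s : Finset ι) (f : ι → R) (k : ℕ) :
    (k + 1 : R) * s.esymm f (k + 1) = ∑ i ∈ s, f i * (s.erase i).esymm f k := by
  induction s using Finset.induction_on generalizing k with
  | empty => rw [esymm, powersetCard_eq_empty.2 (by simp), sum_empty, mul_zero, sum_empty]
  | insert a s ha ih =>
    have herase : ∀ i ∈ s, (insert a s).erase i = insert a (s.erase i) := fun i hi =>
      erase_insert_of_ne (ne_of_mem_of_not_mem hi ha).symm
    rw [sum_insert ha, erase_insert ha, sum_congr rfl fun i hi => by rw [herase i hi],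
      esymm_insert ha]
    cases k with
    | zero =>
      have := ih 0
      simp_all [add_comm]
    | succ k =>
      have hsplit : ∑ i ∈ s, f i * (insert a (s.erase i)).esymm f (k + 1)
          = ∑ i ∈ s, f i * (s.erase i).esymm f (k + 1)
            + f a * ∑ i ∈ s, f i * (s.erase i).esymm f k := by
        rw [mul_sum, ← sum_add_distrib]
        refine sum_congr rfl fun i _ => ?_
        rw [esymm_insert (fun h => ha (mem_of_mem_erase h))]
        ring
      rw [hsplit, ← ih, ← ih]
      push_cast
      ring

theorem esymm_smul (s : Finset ι) (c : R) (f : ι → R) (k : ℕ) :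
    s.esymm (c • f) k = c ^ k * s.esymm f k := by
  rw [esymm, esymm, mul_sum]
  refine sum_congr rfl fun t ht => ?_
  simp only [Pi.smul_apply, smul_eq_mul, prod_mul_distrib, prod_const,
    (mem_powersetCard.1 ht).2]

theorem esymm_pos [PartialOrder R] [IsStrictOrderedRing R] {s : Finset ι} {f : ι → R} {k : ℕ}
    (hk : k ≤ #s) (hf : ∀ i ∈ s, 0 < f i) : 0 < s.esymm f k :=
  sum_pos (fun _ ht => prod_pos fun i hi => hf i ((mem_powersetCard.1 ht).1 hi))
    (powersetCard_nonempty.2 hk)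

end CommSemiring

end Finset

section OrderedField

variable {𝕜 : Type*} [Field 𝕜] [LinearOrder 𝕜] [IsStrictOrderedRing 𝕜]

theorem mul_div_add_le_mul_div_add_s8 {a b c : 𝕜} (ha : 0 < a) (hb : 0 < b) (hbc : b ≤ c) :
    a * b / (a + b) ≤ a * c / (a + c) := by
  have hc : 0 < c := hb.trans_le hbc
  rw [div_le_div_iff₀ (by positivity) (by positivity)]
  nlinarith [mul_pos ha ha]

theorem mul_div_add_add_mul_div_add_le {a b c d : 𝕜} (ha : 0 < a) (hb : 0 < b) (hc : 0 < c)
    (hd : 0 < d) : a * b / (a + b) + c * d / (c + d) ≤ (a + c) * (b + d) / (a + c + (b + d)) := by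
  rw [div_add_div _ _ (by positivity) (by positivity),
    div_le_div_iff₀ (by positivity) (by positivity)]
  nlinarith [sq_nonneg (a * d - b * c), mul_pos ha hd, mul_pos hb hc, mul_pos ha hb,
    mul_pos hc hd]

namespace Finset

def esymmRatio (s : Finset ι) (f : ι → 𝕜) (k : ℕ) : 𝕜 :=
  s.esymm f (k + 1) / s.esymm f k

variable {s : Finset ι} {f g : ι → 𝕜} {k : ℕ}

theorem esymmRatio_pos (hk : k + 1 ≤ #s) (hf : ∀ i ∈ s, 0 < f i) : 0 < s.esymmRatio f k :=
  div_pos (esymm_pos hk hf) (esymm_pos (by omega) hf)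

theorem succ_succ_mul_esymmRatio_succ [DecidableEq ι] (hk : k + 2 ≤ #s)
    (hf : ∀ i ∈ s, 0 < f i) :
    (k + 2 : 𝕜) * s.esymmRatio f (k + 1) =
      ∑ i ∈ s, f i * (s.erase i).esymmRatio f k / (f i + (s.erase i).esymmRatio f k) := by
  have hterm : ∀ i ∈ s, f i * (s.erase i).esymmRatio f k / (f i + (s.erase i).esymmRatio f k)
      = f i * (s.erase i).esymm f (k + 1) / s.esymm f (k + 1) := by
    intro i hi
    have hQ : 0 < (s.erase i).esymm f k :=
      esymm_pos (by rw [card_erase_of_mem hi]; omega) fun j hj => hf j (mem_of_mem_erase hj)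
    rw [esymmRatio, esymm_erase hi]
    field_simp
    ring
  rw [sum_congr rfl hterm, ← sum_div, ← succ_mul_esymm_succ, esymmRatio]
  push_cast
  ring

theorem esymmRatio_add_le (hk : k + 1 ≤ #s) (hf : ∀ i ∈ s, 0 < f i) (hg : ∀ i ∈ s, 0 < g i) :
    s.esymmRatio f k + s.esymmRatio g k ≤ s.esymmRatio (f + g) k := by
  classical
  induction k generalizing s with
  | zero => simp [esymmRatio, esymm_one, sum_add_distrib]
  | succ k ih =>
    have hfg : ∀ i ∈ s, 0 < (f + g) i := fun i hi => add_pos (hf i hi) (hg i hi)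
    rw [← mul_le_mul_iff_right₀ (by positivity : (0 : 𝕜) < k + 2), mul_add,
      succ_succ_mul_esymmRatio_succ hk hf, succ_succ_mul_esymmRatio_succ hk hg,
      succ_succ_mul_esymmRatio_succ hk hfg, ← sum_add_distrib]
    refine sum_le_sum fun i hi => ?_
    have hk' : k + 1 ≤ #(s.erase i) := by rw [card_erase_of_mem hi]; omega
    have hf' : ∀ j ∈ s.erase i, 0 < f j := fun j hj => hf j (mem_of_mem_erase hj)
    have hg' : ∀ j ∈ s.erase i, 0 < g j := fun j hj => hg j (mem_of_mem_erase hj)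
    calc _ ≤ (f i + g i) * ((s.erase i).esymmRatio f k + (s.erase i).esymmRatio g k)
          / (f i + g i + ((s.erase i).esymmRatio f k + (s.erase i).esymmRatio g k)) :=
          mul_div_add_add_mul_div_add_le (hf i hi) (esymmRatio_pos hk' hf') (hg i hi)
            (esymmRatio_pos hk' hg')
      _ ≤ _ := mul_div_add_le_mul_div_add_s8 (hfg i hi)
          (add_pos (esymmRatio_pos hk' hf') (esymmRatio_pos hk' hg')) (ih hk' hf' hg')

end Finset

end OrderedField

theorem Real.prod_rpow_add_prod_rpow_le {s : Finset ι} {w a b : ι → ℝ} (hw : ∀ i ∈ s, 0 ≤ w i)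
    (hw₁ : ∑ i ∈ s, w i = 1) (ha : ∀ i ∈ s, 0 < a i) (hb : ∀ i ∈ s, 0 < b i) :
    ∏ i ∈ s, a i ^ w i + ∏ i ∈ s, b i ^ w i ≤ ∏ i ∈ s, (a i + b i) ^ w i := by
  have hab : ∀ i ∈ s, 0 < a i + b i := fun i hi => add_pos (ha i hi) (hb i hi)
  -- AM-GM for the proportions `c i / (a i + b i)`, whose weighted sums over `c = a, b` add up to 1
  have amgm : ∀ c : ι → ℝ, (∀ i ∈ s, 0 < c i) →
      ∏ i ∈ s, c i ^ w i ≤ (∑ i ∈ s, w i * (c i / (a i + b i))) * ∏ i ∈ s, (a i + b i) ^ w i := by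
    intro c hc
    have hprop : ∀ i ∈ s, 0 ≤ c i / (a i + b i) := fun i hi => (div_pos (hc i hi) (hab i hi)).le
    calc ∏ i ∈ s, c i ^ w i
        = (∏ i ∈ s, (c i / (a i + b i)) ^ w i) * ∏ i ∈ s, (a i + b i) ^ w i := by
          rw [← Finset.prod_mul_distrib]
          refine prod_congr rfl fun i hi => ?_
          rw [← Real.mul_rpow (hprop i hi) (hab i hi).le, div_mul_cancel₀ _ (hab i hi).ne']
      _ ≤ _ := mul_le_mul_of_nonneg_right
          (Real.geom_mean_le_arith_mean_weighted s w _ hw hw₁ hprop)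
          (prod_nonneg fun i hi => (Real.rpow_pos_of_pos (hab i hi) (w i)).le)
  have hsum : ∑ i ∈ s, w i * (a i / (a i + b i)) + ∑ i ∈ s, w i * (b i / (a i + b i)) = 1 := by
    rw [← sum_add_distrib, ← hw₁]
    refine sum_congr rfl fun i hi => ?_
    field_simp [(hab i hi).ne']
  calc _ ≤ (∑ i ∈ s, w i * (a i / (a i + b i))) * ∏ i ∈ s, (a i + b i) ^ w i
        + (∑ i ∈ s, w i * (b i / (a i + b i))) * ∏ i ∈ s, (a i + b i) ^ w i :=
        add_le_add (amgm a ha) (amgm b hb)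
    _ = _ := by rw [← add_mul, hsum, one_mul]

theorem Finset.prod_Ico_div_of_ne_zero {G₀ : Type*} [CommGroupWithZero G₀] {f : ℕ → G₀}
    {m n : ℕ} (hmn : m ≤ n) (hf : ∀ i ∈ Icc m n, f i ≠ 0) :
    ∏ i ∈ Ico m n, f (i + 1) / f i = f n / f m := by
  induction n, hmn using Nat.le_induction with
  | base => rw [Ico_self, prod_empty, div_self (hf m (by simp))]
  | succ n hmn ih =>
    rw [prod_Ico_succ_top hmn, ih fun i hi => hf i (Icc_subset_Icc_right n.le_succ hi),
      div_mul_div_cancel₀' (hf n (by simp [hmn]))]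

namespace Finset

variable {s : Finset ι} {f g : ι → ℝ} {k l : ℕ}

theorem esymm_div_esymm_eq_prod_esymmRatio (hlk : l ≤ k) (hk : k ≤ #s) (hf : ∀ i ∈ s, 0 < f i) :
    s.esymm f k / s.esymm f l = ∏ j ∈ Ico l k, s.esymmRatio f j :=
  (prod_Ico_div_of_ne_zero hlk fun _ hj =>
    (esymm_pos ((mem_Icc.1 hj).2.trans hk) hf).ne').symm

theorem rpow_esymm_div_esymm_add_le (hl : l < k) (hk : k ≤ #s) (hf : ∀ i ∈ s, 0 < f i)
    (hg : ∀ i ∈ s, 0 < g i) :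
    (s.esymm f k / s.esymm f l) ^ ((1 : ℝ) / ((k : ℝ) - l))
      + (s.esymm g k / s.esymm g l) ^ ((1 : ℝ) / ((k : ℝ) - l))
      ≤ (s.esymm (f + g) k / s.esymm (f + g) l) ^ ((1 : ℝ) / ((k : ℝ) - l)) := by
  have hfg : ∀ i ∈ s, 0 < (f + g) i := fun i hi => add_pos (hf i hi) (hg i hi)
  have hIco : ∀ j ∈ Ico l k, j + 1 ≤ #s := fun j hj => (mem_Ico.1 hj).2.trans_le hk
  have hkl : (0 : ℝ) < k - l := sub_pos.2 (by exact_mod_cast hl)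
  set e := (1 : ℝ) / ((k : ℝ) - l)
  have he : 0 ≤ e := by positivity
  have hweights : ∑ _j ∈ Ico l k, e = 1 := by
    rw [sum_const, Nat.card_Ico, nsmul_eq_mul, Nat.cast_sub hl.le]
    exact mul_one_div_cancel hkl.ne'
  have hroot : ∀ h : ι → ℝ, (∀ i ∈ s, 0 < h i) →
      (s.esymm h k / s.esymm h l) ^ e = ∏ j ∈ Ico l k, s.esymmRatio h j ^ e := fun h hh => by
    rw [esymm_div_esymm_eq_prod_esymmRatio hl.le hk hh,
      ← Real.finsetProd_rpow _ _ fun j hj => (esymmRatio_pos (hIco j hj) hh).le]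
  rw [hroot f hf, hroot g hg, hroot _ hfg]
  have hposf : ∀ j ∈ Ico l k, 0 < s.esymmRatio f j := fun j hj => esymmRatio_pos (hIco j hj) hf
  have hposg : ∀ j ∈ Ico l k, 0 < s.esymmRatio g j := fun j hj => esymmRatio_pos (hIco j hj) hg
  calc _ ≤ ∏ j ∈ Ico l k, (s.esymmRatio f j + s.esymmRatio g j) ^ e :=
        Real.prod_rpow_add_prod_rpow_le (fun _ _ => he) hweights hposf hposg
    _ ≤ _ := by
        refine prod_le_prod (fun j hj => ?_) fun j hj => ?_
        · exact Real.rpow_nonneg (add_pos (hposf j hj) (hposg j hj)).le e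
        · exact Real.rpow_le_rpow (add_pos (hposf j hj) (hposg j hj)).le
            (esymmRatio_add_le (hIco j hj) hf hg) he

theorem rpow_esymm_div_esymm_smul (hl : l < k) (hk : k ≤ #s) (hf : ∀ i ∈ s, 0 < f i) {c : ℝ}
    (hc : 0 < c) :
    (s.esymm (c • f) k / s.esymm (c • f) l) ^ ((1 : ℝ) / ((k : ℝ) - l))
      = c * (s.esymm f k / s.esymm f l) ^ ((1 : ℝ) / ((k : ℝ) - l)) := by
  have hquot : 0 ≤ s.esymm f k / s.esymm f l :=
    (div_pos (esymm_pos hk hf) (esymm_pos (hl.le.trans hk) hf)).le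
  rw [esymm_smul, esymm_smul, mul_div_mul_comm, div_eq_mul_inv (c ^ k),
    ← pow_sub₀ c hc.ne' hl.le, Real.mul_rpow (pow_nonneg hc.le _) hquot, one_div, ← Nat.cast_sub hl.le,
    Real.pow_rpow_inv_natCast hc.le (Nat.sub_ne_zero_of_lt hl)]

end Finset

theorem concaveOn_of_superadditive_of_homogeneous {𝕜 E : Type*} [Field 𝕜] [LinearOrder 𝕜]
    [IsStrictOrderedRing 𝕜] [AddCommMonoid E] [Module 𝕜 E] {C : Set E} {f : E → 𝕜}
    (hC : Convex 𝕜 C) (hsmul : ∀ x ∈ C, ∀ c : 𝕜, 0 < c → c • x ∈ C)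
    (hhom : ∀ x ∈ C, ∀ c : 𝕜, 0 < c → f (c • x) = c * f x)
    (hadd : ∀ x ∈ C, ∀ y ∈ C, f x + f y ≤ f (x + y)) : ConcaveOn 𝕜 C f := by
  refine ⟨hC, fun x hx y hy a b ha hb hab => ?_⟩
  rcases ha.eq_or_lt with rfl | ha
  · obtain rfl : b = 1 := by simpa using hab
    simp
  rcases hb.eq_or_lt with rfl | hb
  · obtain rfl : a = 1 := by simpa using hab
    simp
  rw [smul_eq_mul, smul_eq_mul, ← hhom x hx a ha, ← hhom y hy b hb]
  exact hadd _ (hsmul x hx a ha) _ (hsmul y hy b hb)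

theorem concaveOn_rpow_esymm_div_esymm [Fintype ι] {k l : ℕ} (hl : l < k)
    (hk : k ≤ Fintype.card ι) :
    ConcaveOn ℝ {x : ι → ℝ | ∀ i, 0 < x i}
      (fun x => (univ.esymm x k / univ.esymm x l) ^ ((1 : ℝ) / ((k : ℝ) - l))) := by
  refine concaveOn_of_superadditive_of_homogeneous ?_ (fun x hx c hc i => ?_)
    (fun x hx c hc => rpow_esymm_div_esymm_smul hl hk (fun i _ => hx i) hc)
    (fun x hx y hy => rpow_esymm_div_esymm_add_le hl hk (fun i _ => hx i) fun i _ => hy i)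
  · simpa [Set.pi] using convex_pi (s := Set.univ) fun (_ : ι) _ => convex_Ioi (0 : ℝ)
  · exact mul_pos hc (hx i)

theorem stmt8 (n k l : ℕ) (hl : l < k) (hkn : k ≤ n) :
    ConcaveOn ℝ {lam : Fin n → ℝ | ∀ i, 0 < lam i}
      (fun lam => (sigmaE n k lam / sigmaE n l lam) ^ ((1 : ℝ) / ((k : ℝ) - l))) :=
  concaveOn_rpow_esymm_div_esymm hl (by rwa [Fintype.card_fin])
end
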